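/- arXiv:2404.00078 — 4 statements merged into one kernel-verified Lean document; each statement's English description precedes it below -/
import Mathlib

section
/- Let (X, ℬ, μ) be a probability space, T an ergodic measure-preserving transformation, and S ⊆ X measurable with μ(S) > 0. Then ∫_S n_S(x) dμ = 1, where n_S(x) = inf{n ≥ 1 : T^n(x) ∈ S} is the first return time. In particular, the average first return time to S equals 1/μ(S). -/
open MeasureTheory Filter Topology

private lemma tsum_ite_lt (m : ℕ) : (∑' k : ℕ, if k < m then (1 : ENNReal) else 0) = m := by
  rw [tsum_eq_sum (s := Finset.range m)
    (fun k hk => if_neg (by simpa [Finset.mem_range] using hk))]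
  have h : ∀ k ∈ Finset.range m, (if k < m then (1 : ENNReal) else 0) = 1 :=
    fun k hk => if_pos (Finset.mem_range.mp hk)
  rw [Finset.sum_congr rfl h]
  simp

/-- Kac's lemma: for an ergodic measure-preserving transformation `T`
of a probability space and a set `S` of positive measure, the integral over `S` of
the first return time `n_S(x) = inf {n ≥ 1 : T^n x ∈ S}` equals `1`; in particular
the average first return time equals `1/μ(S)`. -/
theorem stmt4 {X : Type*} [MeasurableSpace X] (μ : Measure X) [IsProbabilityMeasure μ]
    (T : X → X) (hT : Ergodic T μ)
    (S : Set X) (hS : MeasurableSet S) (hS0 : 0 < μ S) :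
    (∫⁻ x in S, ((sInf {n : ℕ | 1 ≤ n ∧ T^[n] x ∈ S} : ℕ) : ENNReal) ∂μ) = 1 ∧
      (∫⁻ x in S, ((sInf {n : ℕ | 1 ≤ n ∧ T^[n] x ∈ S} : ℕ) : ENNReal) ∂μ) / μ S = 1 / μ S := by
  have hTm : Measurable T := hT.toMeasurePreserving.measurable
  set f : X → ℕ := fun x => sInf {n : ℕ | 1 ≤ n ∧ T^[n] x ∈ S} with hf
  -- the set of points never visiting S
  set N : Set X := {x | ∀ j : ℕ, T^[j] x ∉ S} with hNdef
  have hNmeas : MeasurableSet N := by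
    have : N = ⋂ j : ℕ, T^[j] ⁻¹' Sᶜ := by ext x; simp [hNdef]
    rw [this]; exact MeasurableSet.iInter fun j => (hTm.iterate j) hS.compl
  have hN0 : μ N = 0 := by
    have hNsub : N ≤ᵐ[μ] T ⁻¹' N := by
      refine Filter.Eventually.of_forall ?_
      intro x hx j
      simpa [Function.iterate_succ_apply] using hx (j + 1)
    rcases hT.ae_empty_or_univ_of_ae_le_preimage hNmeas.nullMeasurableSet hNsub with h | h
    · simpa using measure_congr h
    · exfalso
      have hSN : S ∩ N = ∅ := by
        ext x; simp only [Set.mem_inter_iff, Set.mem_empty_iff_false, iff_false]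
        rintro ⟨hxS, hxN⟩; exact hxN 0 (by simpa using hxS)
      have : μ S ≤ μ Nᶜ := by
        apply measure_mono
        intro x hx hxN
        have : x ∈ S ∩ N := ⟨hx, hxN⟩
        simp [hSN] at this
      have hNc : μ Nᶜ = 0 := by
        have h2 := measure_congr h.compl
        simpa using h2
      exact absurd (le_antisymm (this.trans hNc.le) zero_le) (ne_of_gt hS0)
  have hTN0 : μ (T ⁻¹' N) = 0 := by
    rw [hT.measure_preimage hNmeas.nullMeasurableSet]; exact hN0
  -- D k : iterates 1..k avoid S
  set D : ℕ → Set X := fun k => {x | ∀ j : ℕ, 1 ≤ j → j ≤ k → T^[j] x ∉ S} with hDdef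
  have hDmeas : ∀ k, MeasurableSet (D k) := by
    intro k
    have : D k = ⋂ j ∈ Set.Icc 1 k, T^[j] ⁻¹' Sᶜ := by
      ext x; simp [hDdef, Set.mem_Icc]
    rw [this]
    exact MeasurableSet.biInter (Set.to_countable _)
      fun j _ => (hTm.iterate j) hS.compl
  -- preimage identity
  have hDpre : ∀ k, T ⁻¹' (Sᶜ ∩ D k) = D (k + 1) := by
    intro k
    ext x
    simp only [Set.mem_preimage, Set.mem_inter_iff, Set.mem_compl_iff, hDdef, Set.mem_setOf_eq]
    constructor
    · rintro ⟨h1, h2⟩ j hj1 hjk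
      obtain ⟨i, rfl⟩ : ∃ i, j = i + 1 := ⟨j - 1, by omega⟩
      rw [Function.iterate_succ_apply]
      rcases Nat.eq_zero_or_pos i with hi | hi
      · subst hi; simpa using h1
      · exact h2 i hi (by omega)
    · intro h
      refine ⟨by simpa using h 1 le_rfl (by omega), ?_⟩
      intro j hj1 hjk
      have := h (j + 1) (by omega) (by omega)
      rwa [Function.iterate_succ_apply] at this
  have hstep : ∀ k, μ (D k) = μ (S ∩ D k) + μ (D (k + 1)) := by
    intro k
    have h1 : μ (D k ∩ S) + μ (D k \ S) = μ (D k) := measure_inter_add_diff _ hS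
    have h2 : D k \ S = Sᶜ ∩ D k := by ext x; simp [Set.mem_diff]; tauto
    have h3 : μ (Sᶜ ∩ D k) = μ (D (k + 1)) := by
      rw [← hDpre k, hT.measure_preimage (hS.compl.inter (hDmeas k)).nullMeasurableSet]
    rw [← h1, h2, h3, Set.inter_comm]
  have hpartial : ∀ m, (∑ k ∈ Finset.range m, μ (S ∩ D k)) + μ (D m) = 1 := by
    intro m
    induction m with
    | zero =>
      simp only [Finset.range_zero, Finset.sum_empty, zero_add]
      have : D 0 = Set.univ := by
        ext x; simp only [hDdef, Set.mem_setOf_eq, Set.mem_univ, iff_true]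
        intro j hj1 hj0; omega
      rw [this, measure_univ]
    | succ m ih =>
      rw [Finset.sum_range_succ, add_assoc, ← hstep m, ih]
  -- intersection of D's
  have hDinter : ⋂ m, D m = T ⁻¹' N := by
    ext x
    simp only [Set.mem_iInter, hDdef, Set.mem_setOf_eq, Set.mem_preimage, hNdef]
    constructor
    · intro h j
      have := h (j + 1) (j + 1) (by omega) le_rfl
      rwa [Function.iterate_succ_apply] at this
    · intro h m j hj1 hjm
      obtain ⟨i, rfl⟩ : ∃ i, j = i + 1 := ⟨j - 1, by omega⟩
      rw [Function.iterate_succ_apply]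
      exact h i
  have hDanti : Antitone D := by
    intro a b hab x hx j hj1 hja
    exact hx j hj1 (hja.trans hab)
  have hDtend : Tendsto (fun m => μ (D m)) atTop (𝓝 0) := by
    have := tendsto_measure_iInter_atTop (μ := μ) (s := D)
      (fun m => (hDmeas m).nullMeasurableSet) hDanti ⟨0, measure_ne_top μ _⟩
    rw [hDinter, hTN0] at this
    exact this
  -- tsum of measures equals 1
  have htsum : (∑' k : ℕ, μ (S ∩ D k)) = 1 := by
    have h1 : Tendsto (fun m => ∑ k ∈ Finset.range m, μ (S ∩ D k)) atTop
        (𝓝 (∑' k : ℕ, μ (S ∩ D k))) := ENNReal.tendsto_nat_tsum _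
    have h2 : Tendsto (fun m => ∑ k ∈ Finset.range m, μ (S ∩ D k)) atTop (𝓝 1) := by
      have heq : (fun m => ∑ k ∈ Finset.range m, μ (S ∩ D k))
          = fun m => 1 - μ (D m) := by
        funext m
        have := hpartial m
        have hfin : μ (D m) ≤ 1 := prob_le_one
        exact ENNReal.eq_sub_of_add_eq (by exact (lt_of_le_of_lt hfin ENNReal.one_lt_top).ne) this
      rw [heq]
      have := ENNReal.Tendsto.sub (tendsto_const_nhds (x := (1 : ENNReal))) hDtend
        (Or.inr (by simp))
      simpa using this
    exact tendsto_nhds_unique h1 h2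
  -- layer cake
  have hlayer : ∀ x, ((f x : ℕ) : ENNReal)
      = ∑' k : ℕ, Set.indicator {y | k < f y} (fun _ => (1 : ENNReal)) x := by
    intro x
    rw [show (∑' k : ℕ, Set.indicator {y | k < f y} (fun _ => (1 : ENNReal)) x)
        = ∑' k : ℕ, if k < f x then (1 : ENNReal) else 0 from
      tsum_congr fun k => by simp [Set.indicator]]
    exact (tsum_ite_lt (f x)).symm
  -- pointwise characterization off the null set
  have hiff : ∀ k : ℕ, ∀ x, x ∈ S → x ∉ T ⁻¹' N → (k < f x ↔ x ∈ D k) := by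
    intro k x hxS hxN
    constructor
    · intro hk j hj1 hjk hmem
      have : f x ≤ j := Nat.sInf_le ⟨hj1, hmem⟩
      omega
    · intro hxD
      simp only [Set.mem_preimage, hNdef, Set.mem_setOf_eq, not_forall, not_not] at hxN
      obtain ⟨j, hj⟩ := hxN
      rw [← Function.iterate_succ_apply] at hj
      have hne : {n : ℕ | 1 ≤ n ∧ T^[n] x ∈ S}.Nonempty := ⟨j + 1, by omega, hj⟩
      have hmem := Nat.sInf_mem hne
      by_contra hle
      exact hxD (f x) hmem.1 (by omega) hmem.2
  have haeq : ∀ k : ℕ, (fun x => Set.indicator {y | k < f y} (fun _ => (1 : ENNReal)) x)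
      =ᵐ[μ.restrict S] (fun x => Set.indicator (D k) (fun _ => (1 : ENNReal)) x) := by
    intro k
    have hae1 : ∀ᵐ x ∂(μ.restrict S), x ∉ T ⁻¹' N :=
      ae_restrict_of_ae ((measure_eq_zero_iff_ae_notMem).mp hTN0)
    filter_upwards [hae1, ae_restrict_mem hS] with x hx1 hx2
    simp only [Set.indicator]
    by_cases h : x ∈ D k
    · simp [h, (hiff k x hx2 hx1).mpr h]
    · have : ¬ k < f x := fun hk => h ((hiff k x hx2 hx1).mp hk)
      simp [h, this]
  have hint : (∫⁻ x in S, ((f x : ℕ) : ENNReal) ∂μ) = 1 := by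
    calc (∫⁻ x in S, ((f x : ℕ) : ENNReal) ∂μ)
        = ∫⁻ x in S, ∑' k : ℕ, Set.indicator {y | k < f y} (fun _ => (1 : ENNReal)) x ∂μ :=
          lintegral_congr hlayer
      _ = ∑' k : ℕ, ∫⁻ x in S, Set.indicator {y | k < f y} (fun _ => (1 : ENNReal)) x ∂μ := by
          refine lintegral_tsum fun k => ?_
          exact (measurable_const.indicator (hDmeas k)).aemeasurable.congr (haeq k).symm
      _ = ∑' k : ℕ, ∫⁻ x in S, Set.indicator (D k) (fun _ => (1 : ENNReal)) x ∂μ :=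
          tsum_congr fun k => lintegral_congr_ae (haeq k)
      _ = ∑' k : ℕ, μ (S ∩ D k) := by
          refine tsum_congr fun k => ?_
          rw [lintegral_indicator (hDmeas k)]
          simp [Measure.restrict_restrict (hDmeas k), Set.inter_comm]
      _ = 1 := htsum
  exact ⟨hint, by rw [hint]⟩
end

section
/- Let α be the unique root in (0,1) of p(x) = x³ − x² − 3x + 1, and define the interval translation map T : [0,1) → [0,1) by T(x) = x + α on [0, 1−α), T(x) = x + α² on [1−α, 1−α²), and T(x) = x + α² − 1 on [1−α², 1). Then the first return map T₁* of T to the interval I₁ = [1−α, 1) is given by T₁*(y) = y + α² for y ∈ [1−α, 1−α²), T₁*(y) = y + α³ for y ∈ [1−α², 1−α³), and T₁*(y) = y + α³ − α for y ∈ [1−α³, 1). -/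
/-- let `α` be the unique root in `(0,1)` of `x³ − x² − 3x + 1` and let
`T` be the interval translation map `T(x) = x + α` on `[0, 1−α)`, `x + α²` on
`[1−α, 1−α²)`, `x + α² − 1` on `[1−α², 1)`. Then the first return map `T₁*` of `T`
to `I₁ = [1−α, 1)`, given by `T₁*(y) = T^[n(y)](y)` with
`n(y) = min {n ≥ 1 : T^[n](y) ∈ I₁}`, satisfies `T₁*(y) = y + α²` on `[1−α, 1−α²)`,
`T₁*(y) = y + α³` on `[1−α², 1−α³)`, and `T₁*(y) = y + α³ − α` on `[1−α³, 1)`. -/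
theorem stmt10 (α : ℝ) (hα : α ∈ Set.Ioo (0 : ℝ) 1)
    (hroot : α ^ 3 - α ^ 2 - 3 * α + 1 = 0)
    (T : ℝ → ℝ)
    (hT1 : ∀ x ∈ Set.Ico (0 : ℝ) (1 - α), T x = x + α)
    (hT2 : ∀ x ∈ Set.Ico (1 - α) (1 - α ^ 2), T x = x + α ^ 2)
    (hT3 : ∀ x ∈ Set.Ico (1 - α ^ 2) (1 : ℝ), T x = x + α ^ 2 - 1) :
    ∀ y : ℝ,
      (y ∈ Set.Ico (1 - α) (1 - α ^ 2) →
        T^[sInf {n : ℕ | 1 ≤ n ∧ T^[n] y ∈ Set.Ico (1 - α) 1}] y = y + α ^ 2) ∧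
      (y ∈ Set.Ico (1 - α ^ 2) (1 - α ^ 3) →
        T^[sInf {n : ℕ | 1 ≤ n ∧ T^[n] y ∈ Set.Ico (1 - α) 1}] y = y + α ^ 3) ∧
      (y ∈ Set.Ico (1 - α ^ 3) (1 : ℝ) →
        T^[sInf {n : ℕ | 1 ≤ n ∧ T^[n] y ∈ Set.Ico (1 - α) 1}] y = y + α ^ 3 - α) := by
  obtain ⟨hα0, hα1⟩ := hα
  have hpos : α ^ 2 * (1 - α) > 0 := mul_pos (pow_pos hα0 2) (by linarith)
  have h3 : 3 * α < 1 := by nlinarith [hpos]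
  intro y
  refine ⟨?_, ?_, ?_⟩
  · rintro ⟨hy1, hy2⟩
    have hTy : T y = y + α ^ 2 := hT2 y ⟨hy1, hy2⟩
    have hmem : (1 : ℕ) ∈ {n : ℕ | 1 ≤ n ∧ T^[n] y ∈ Set.Ico (1 - α) 1} := by
      refine ⟨le_refl 1, ?_⟩
      simp only [Function.iterate_one, hTy]
      constructor <;> nlinarith
    have h1 : sInf {n : ℕ | 1 ≤ n ∧ T^[n] y ∈ Set.Ico (1 - α) 1} = 1 := by
      have hle := Nat.sInf_le hmem
      have := (Nat.sInf_mem ⟨1, hmem⟩).1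
      omega
    rw [h1, Function.iterate_one, hTy]
  · rintro ⟨hy1, hy2⟩
    -- n = 4
    have hy2' : y < 1 := by nlinarith
    have h1 : T y = y + α ^ 2 - 1 := hT3 y ⟨hy1, hy2'⟩
    have hb1 : T y ∈ Set.Ico (0 : ℝ) (1 - α) := by
      rw [h1]; constructor <;> nlinarith
    have h2 : T (T y) = y + α ^ 2 - 1 + α := by rw [hT1 _ hb1, h1]
    have hb2 : T (T y) ∈ Set.Ico (0 : ℝ) (1 - α) := by
      rw [h2]; constructor <;> nlinarith
    have h3' : T (T (T y)) = y + α ^ 2 - 1 + 2 * α := by rw [hT1 _ hb2, h2]; ring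
    have hb3 : T (T (T y)) ∈ Set.Ico (0 : ℝ) (1 - α) := by
      rw [h3']; constructor <;> nlinarith
    have h4 : T (T (T (T y))) = y + α ^ 3 := by rw [hT1 _ hb3, h3']; nlinarith
    have hmem : (4 : ℕ) ∈ {n : ℕ | 1 ≤ n ∧ T^[n] y ∈ Set.Ico (1 - α) 1} := by
      refine ⟨by norm_num, ?_⟩
      simp only [Function.iterate_succ, Function.iterate_zero, Function.comp_apply, id_eq, h4]
      constructor <;> nlinarith
    have hinf : sInf {n : ℕ | 1 ≤ n ∧ T^[n] y ∈ Set.Ico (1 - α) 1} = 4 := by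
      have hle := Nat.sInf_le hmem
      have hm := Nat.sInf_mem ⟨4, hmem⟩
      set m := sInf {n : ℕ | 1 ≤ n ∧ T^[n] y ∈ Set.Ico (1 - α) 1} with hmdef
      obtain ⟨hm1, hm2⟩ := hm
      interval_cases m
      · exfalso
        simp only [Function.iterate_one, h1] at hm2
        have := hm2.1; nlinarith
      · exfalso
        simp only [Function.iterate_succ, Function.iterate_zero, Function.comp_apply, id_eq, h2] at hm2
        have := hm2.1; nlinarith
      · exfalso
        simp only [Function.iterate_succ, Function.iterate_zero, Function.comp_apply, id_eq, h3'] at hm2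
        have := hm2.1; nlinarith
      · rfl
    rw [hinf]
    simp only [Function.iterate_succ, Function.iterate_zero, Function.comp_apply, id_eq, h4]
  · rintro ⟨hy1, hy2⟩
    -- n = 3
    have hy1' : 1 - α ^ 2 ≤ y := by nlinarith
    have h1 : T y = y + α ^ 2 - 1 := hT3 y ⟨hy1', hy2⟩
    have hb1 : T y ∈ Set.Ico (0 : ℝ) (1 - α) := by
      rw [h1]; constructor <;> nlinarith
    have h2 : T (T y) = y + α ^ 2 - 1 + α := by rw [hT1 _ hb1, h1]
    have hb2 : T (T y) ∈ Set.Ico (0 : ℝ) (1 - α) := by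
      rw [h2]; constructor <;> nlinarith
    have h3' : T (T (T y)) = y + α ^ 3 - α := by rw [hT1 _ hb2, h2]; nlinarith
    have hmem : (3 : ℕ) ∈ {n : ℕ | 1 ≤ n ∧ T^[n] y ∈ Set.Ico (1 - α) 1} := by
      refine ⟨by norm_num, ?_⟩
      simp only [Function.iterate_succ, Function.iterate_zero, Function.comp_apply, id_eq, h3']
      constructor <;> nlinarith
    have hinf : sInf {n : ℕ | 1 ≤ n ∧ T^[n] y ∈ Set.Ico (1 - α) 1} = 3 := by
      have hle := Nat.sInf_le hmem
      have hm := Nat.sInf_mem ⟨3, hmem⟩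
      set m := sInf {n : ℕ | 1 ≤ n ∧ T^[n] y ∈ Set.Ico (1 - α) 1} with hmdef
      obtain ⟨hm1, hm2⟩ := hm
      interval_cases m
      · exfalso
        simp only [Function.iterate_one, h1] at hm2
        have := hm2.1; nlinarith
      · exfalso
        simp only [Function.iterate_succ, Function.iterate_zero, Function.comp_apply, id_eq, h2] at hm2
        have := hm2.1; nlinarith
      · rfl
    rw [hinf]
    simp only [Function.iterate_succ, Function.iterate_zero, Function.comp_apply, id_eq, h3']
end

section
/- Let α be the unique root in (0,1) of p(x) = x³ − x² − 3x + 1 and let T be the interval translation map T(x) = x + α on [0,1−α), x + α² on [1−α,1−α²), x + α² − 1 on [1−α²,1). Then the affine map y = 1 − α + αx conjugates T on [0,1) to the first return map T₁* on [1−α,1): for all x ∈ [0,1), 1 − α + α·T(x) = T₁*(1 − α + αx). -/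
private lemma sInf_eq_of_mem_of_le (S : Set ℕ) (n : ℕ) (hn : n ∈ S)
    (h : ∀ m ∈ S, n ≤ m) : sInf S = n :=
  le_antisymm (Nat.sInf_le hn) (h _ (Nat.sInf_mem ⟨n, hn⟩))

/-- with `α` the unique root in `(0,1)` of `x³ − x² − 3x + 1` and `T`
the interval translation map as above, the affine map `y = 1 − α + αx` conjugates
`T` on `[0,1)` to the first return map `T₁*` of `T` to `I₁ = [1−α, 1)`:
for all `x ∈ [0,1)`, `1 − α + α·T(x) = T₁*(1 − α + αx)`. -/
theorem stmt11 (α : ℝ) (hα : α ∈ Set.Ioo (0 : ℝ) 1)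
    (hroot : α ^ 3 - α ^ 2 - 3 * α + 1 = 0)
    (T : ℝ → ℝ)
    (hT1 : ∀ x ∈ Set.Ico (0 : ℝ) (1 - α), T x = x + α)
    (hT2 : ∀ x ∈ Set.Ico (1 - α) (1 - α ^ 2), T x = x + α ^ 2)
    (hT3 : ∀ x ∈ Set.Ico (1 - α ^ 2) (1 : ℝ), T x = x + α ^ 2 - 1) :
    ∀ x ∈ Set.Ico (0 : ℝ) 1,
      1 - α + α * T x
        = T^[sInf {n : ℕ | 1 ≤ n ∧ T^[n] (1 - α + α * x) ∈ Set.Ico (1 - α) 1}]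
            (1 - α + α * x) := by
  obtain ⟨hα0, hα1⟩ := hα
  intro x hx
  obtain ⟨hx0, hx1⟩ := hx
  have hr : α ^ 3 = α ^ 2 + 3 * α - 1 := by linarith
  have hsq : α ^ 2 < α := by nlinarith
  have hsq0 : 0 < α ^ 2 := by positivity
  have hc0 : 0 < α ^ 3 := by positivity
  have hc : α ^ 3 < α ^ 2 := by nlinarith
  have h3 : 3 * α < 1 := by
    nlinarith [mul_pos (mul_pos hα0 hα0) (sub_pos.2 hα1)]
  have hk : α ^ 2 + 2 * α < 1 := by linarith
  set y := 1 - α + α * x with hy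
  rcases lt_or_ge x (1 - α) with hA | hBC
  · -- Case A: x ∈ [0, 1-α), return time 1
    have hTx : T x = x + α := hT1 x ⟨hx0, hA⟩
    have hy1 : 1 - α ≤ y := by nlinarith [mul_nonneg hα0.le hx0]
    have hy2 : y < 1 - α ^ 2 := by nlinarith [mul_lt_mul_of_pos_left hA hα0]
    have hTy : T y = y + α ^ 2 := hT2 y ⟨hy1, hy2⟩
    have hmem : 1 ∈ {n : ℕ | 1 ≤ n ∧ T^[n] y ∈ Set.Ico (1 - α) 1} := by
      refine ⟨le_refl 1, ?_⟩
      rw [Function.iterate_one, hTy, Set.mem_Ico]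
      constructor <;> linarith
    have hinf : sInf {n : ℕ | 1 ≤ n ∧ T^[n] y ∈ Set.Ico (1 - α) 1} = 1 :=
      sInf_eq_of_mem_of_le _ _ hmem (fun m hm => hm.1)
    rw [hinf, Function.iterate_one, hTy, hTx, hy]; ring
  · rcases lt_or_ge x (1 - α ^ 2) with hB | hC
    · -- Case B: x ∈ [1-α, 1-α²), return time 4
      have hTx : T x = x + α ^ 2 := hT2 x ⟨hBC, hB⟩
      have hy1 : 1 - α ^ 2 ≤ y := by
        nlinarith [mul_le_mul_of_nonneg_left hBC hα0.le]
      have hy2 : y < 1 - α ^ 3 := by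
        nlinarith [mul_lt_mul_of_pos_left hB hα0]
      have e1 : T y = y + α ^ 2 - 1 := hT3 y ⟨hy1, by linarith⟩
      have e2 : T (y + α ^ 2 - 1) = y + α ^ 2 + α - 1 := by
        rw [hT1 (y + α ^ 2 - 1) ⟨by linarith, by linarith⟩]; ring
      have e3 : T (y + α ^ 2 + α - 1) = y + α ^ 2 + 2 * α - 1 := by
        rw [hT1 (y + α ^ 2 + α - 1) ⟨by linarith, by linarith⟩]; ring
      have e4 : T (y + α ^ 2 + 2 * α - 1) = y + α ^ 2 + 3 * α - 1 := by
        rw [hT1 (y + α ^ 2 + 2 * α - 1) ⟨by linarith, by linarith⟩]; ring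
      have i1 : T^[1] y = y + α ^ 2 - 1 := by rw [Function.iterate_one, e1]
      have i2 : T^[2] y = y + α ^ 2 + α - 1 := by
        rw [show (2 : ℕ) = 1 + 1 from rfl, Function.iterate_succ_apply', i1, e2]
      have i3 : T^[3] y = y + α ^ 2 + 2 * α - 1 := by
        rw [show (3 : ℕ) = 2 + 1 from rfl, Function.iterate_succ_apply', i2, e3]
      have i4 : T^[4] y = y + α ^ 2 + 3 * α - 1 := by
        rw [show (4 : ℕ) = 3 + 1 from rfl, Function.iterate_succ_apply', i3, e4]
      have hmem : 4 ∈ {n : ℕ | 1 ≤ n ∧ T^[n] y ∈ Set.Ico (1 - α) 1} := by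
        refine ⟨by norm_num, ?_⟩
        rw [i4, Set.mem_Ico]
        constructor <;> nlinarith
      have hinf : sInf {n : ℕ | 1 ≤ n ∧ T^[n] y ∈ Set.Ico (1 - α) 1} = 4 := by
        refine sInf_eq_of_mem_of_le _ _ hmem (fun m hm => ?_)
        obtain ⟨hm1, hm2⟩ := hm
        by_contra h
        push_neg at h
        interval_cases m
        · rw [i1, Set.mem_Ico] at hm2; linarith [hm2.1]
        · rw [i2, Set.mem_Ico] at hm2; linarith [hm2.1]
        · rw [i3, Set.mem_Ico] at hm2; linarith [hm2.1]
      rw [hinf, i4, hTx, hy]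
      linear_combination hr
    · -- Case C: x ∈ [1-α², 1), return time 3
      have hTx : T x = x + α ^ 2 - 1 := hT3 x ⟨hC, hx1⟩
      have hy1 : 1 - α ^ 3 ≤ y := by
        nlinarith [mul_le_mul_of_nonneg_left hC hα0.le]
      have hy2 : y < 1 := by nlinarith [mul_lt_mul_of_pos_left hx1 hα0]
      have e1 : T y = y + α ^ 2 - 1 := hT3 y ⟨by linarith, hy2⟩
      have e2 : T (y + α ^ 2 - 1) = y + α ^ 2 + α - 1 := by
        rw [hT1 (y + α ^ 2 - 1) ⟨by linarith, by linarith⟩]; ring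
      have e3 : T (y + α ^ 2 + α - 1) = y + α ^ 2 + 2 * α - 1 := by
        rw [hT1 (y + α ^ 2 + α - 1) ⟨by linarith, by linarith⟩]; ring
      have i1 : T^[1] y = y + α ^ 2 - 1 := by rw [Function.iterate_one, e1]
      have i2 : T^[2] y = y + α ^ 2 + α - 1 := by
        rw [show (2 : ℕ) = 1 + 1 from rfl, Function.iterate_succ_apply', i1, e2]
      have i3 : T^[3] y = y + α ^ 2 + 2 * α - 1 := by
        rw [show (3 : ℕ) = 2 + 1 from rfl, Function.iterate_succ_apply', i2, e3]
      have hmem : 3 ∈ {n : ℕ | 1 ≤ n ∧ T^[n] y ∈ Set.Ico (1 - α) 1} := by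
        refine ⟨by norm_num, ?_⟩
        rw [i3, Set.mem_Ico]
        constructor <;> linarith
      have hinf : sInf {n : ℕ | 1 ≤ n ∧ T^[n] y ∈ Set.Ico (1 - α) 1} = 3 := by
        refine sInf_eq_of_mem_of_le _ _ hmem (fun m hm => ?_)
        obtain ⟨hm1, hm2⟩ := hm
        by_contra h
        push_neg at h
        interval_cases m
        · rw [i1, Set.mem_Ico] at hm2; linarith [hm2.1]
        · rw [i2, Set.mem_Ico] at hm2; linarith [hm2.1]
      rw [hinf, i3, hTx, hy]
      linear_combination hr
end

section
/- Let α be the unique root in (0,1) of p(x) = x³ − x² − 3x + 1 and let T be the interval translation map T(x) = x + α on [0,1−α), x + α² on [1−α,1−α²), x + α² − 1 on [1−α²,1). Then the first return map T₂* of T to I₂ = [0, α²) is given by T₂*(y) = y + α³ for y ∈ [0, α²−α³), T₂*(y) = y + α⁴ for y ∈ [α²−α³, α²−α⁴), and T₂*(y) = y + α⁴ − α² for y ∈ [α²−α⁴, α²); moreover the linear map y = α²x conjugates T on [0,1) to T₂* on [0,α²). -/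
private lemma sInf_ret {S : Set ℕ} {k : ℕ} (hk : k ∈ S)
    (h : ∀ m, m < k → m ∉ S) : sInf S = k :=
  le_antisymm (Nat.sInf_le hk)
    (le_of_not_gt fun hlt => h _ hlt (Nat.sInf_mem ⟨k, hk⟩))

/-- with `α` the unique root in `(0,1)` of `x³ − x² − 3x + 1` and `T`
the interval translation map as above, the first return map `T₂*` of `T` to
`I₂ = [0, α²)` is given by `T₂*(y) = y + α³` on `[0, α²−α³)`, `y + α⁴` on
`[α²−α³, α²−α⁴)`, `y + α⁴ − α²` on `[α²−α⁴, α²)`; moreover the linear map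
`y = α²x` conjugates `T` on `[0,1)` to `T₂*` on `[0, α²)`. -/
theorem stmt12 (α : ℝ) (hα : α ∈ Set.Ioo (0 : ℝ) 1)
    (hroot : α ^ 3 - α ^ 2 - 3 * α + 1 = 0)
    (T : ℝ → ℝ)
    (hT1 : ∀ x ∈ Set.Ico (0 : ℝ) (1 - α), T x = x + α)
    (hT2 : ∀ x ∈ Set.Ico (1 - α) (1 - α ^ 2), T x = x + α ^ 2)
    (hT3 : ∀ x ∈ Set.Ico (1 - α ^ 2) (1 : ℝ), T x = x + α ^ 2 - 1) :
    (∀ y : ℝ,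
      (y ∈ Set.Ico (0 : ℝ) (α ^ 2 - α ^ 3) →
        T^[sInf {n : ℕ | 1 ≤ n ∧ T^[n] y ∈ Set.Ico (0 : ℝ) (α ^ 2)}] y = y + α ^ 3) ∧
      (y ∈ Set.Ico (α ^ 2 - α ^ 3) (α ^ 2 - α ^ 4) →
        T^[sInf {n : ℕ | 1 ≤ n ∧ T^[n] y ∈ Set.Ico (0 : ℝ) (α ^ 2)}] y = y + α ^ 4) ∧
      (y ∈ Set.Ico (α ^ 2 - α ^ 4) (α ^ 2) →
        T^[sInf {n : ℕ | 1 ≤ n ∧ T^[n] y ∈ Set.Ico (0 : ℝ) (α ^ 2)}] y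
          = y + α ^ 4 - α ^ 2)) ∧
    (∀ x ∈ Set.Ico (0 : ℝ) 1,
      α ^ 2 * T x
        = T^[sInf {n : ℕ | 1 ≤ n ∧ T^[n] (α ^ 2 * x) ∈ Set.Ico (0 : ℝ) (α ^ 2)}]
            (α ^ 2 * x)) := by
  obtain ⟨hα0, hα1⟩ := hα
  have h3 : α ^ 3 = α ^ 2 + 3 * α - 1 := by linarith
  have h4 : α ^ 4 = 4 * α ^ 2 + 2 * α - 1 := by linear_combination (α + 1) * hroot
  have hlo : 1/4 < α := by nlinarith [sq_nonneg α, sq_nonneg (α - 1/4), sq_nonneg (1 - α)]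
  have hhi : α < 1/3 := by nlinarith [sq_nonneg α, sq_nonneg (α - 1/3), sq_nonneg (1 - α)]
  have hsq : α ^ 2 < α := by nlinarith
  have h4pos : 0 < α ^ 4 := by positivity
  have h3pos : 0 < α ^ 3 := by positivity
  have h2pos : 0 < α ^ 2 := by positivity
  have q1 : 3 * α ^ 2 < α := by nlinarith
  have q2 : α < 4 * α ^ 2 := by nlinarith
  have q3 : α ^ 4 < α ^ 2 := by nlinarith
  have key : ∀ y : ℝ,
      (y ∈ Set.Ico (0 : ℝ) (α ^ 2 - α ^ 3) →
        T^[sInf {n : ℕ | 1 ≤ n ∧ T^[n] y ∈ Set.Ico (0 : ℝ) (α ^ 2)}] y = y + α ^ 3) ∧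
      (y ∈ Set.Ico (α ^ 2 - α ^ 3) (α ^ 2 - α ^ 4) →
        T^[sInf {n : ℕ | 1 ≤ n ∧ T^[n] y ∈ Set.Ico (0 : ℝ) (α ^ 2)}] y = y + α ^ 4) ∧
      (y ∈ Set.Ico (α ^ 2 - α ^ 4) (α ^ 2) →
        T^[sInf {n : ℕ | 1 ≤ n ∧ T^[n] y ∈ Set.Ico (0 : ℝ) (α ^ 2)}] y
          = y + α ^ 4 - α ^ 2) := by
    intro y
    refine ⟨?_, ?_, ?_⟩
    · -- Case 1: y ∈ [0, α² − α³), return time 4, translation α³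
      rintro ⟨hy0, hy1⟩
      have hy1' : y < 1 - 3 * α := by linarith
      have e1 : T y = y + α := hT1 y ⟨hy0, by linarith⟩
      have e2 : T (y + α) = y + 2 * α := by
        rw [hT1 (y + α) ⟨by linarith, by linarith⟩]; ring
      have e3 : T (y + 2 * α) = y + 3 * α := by
        rw [hT1 (y + 2 * α) ⟨by linarith, by linarith⟩]; ring
      have e4 : T (y + 3 * α) = y + 3 * α + α ^ 2 - 1 := by
        rw [hT3 (y + 3 * α) ⟨by linarith, by linarith⟩]
      have i1 : T^[1] y = y + α := e1
      have i2 : T^[2] y = y + 2 * α := by show T (T y) = _; rw [e1, e2]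
      have i3 : T^[3] y = y + 3 * α := by show T (T (T y)) = _; rw [e1, e2, e3]
      have i4 : T^[4] y = y + α ^ 3 := by
        show T (T (T (T y))) = _; rw [e1, e2, e3, e4]; linarith
      have hs : sInf {n : ℕ | 1 ≤ n ∧ T^[n] y ∈ Set.Ico (0 : ℝ) (α ^ 2)} = 4 := by
        apply sInf_ret
        · exact ⟨by norm_num, by rw [i4]; exact ⟨by linarith, by linarith⟩⟩
        · intro m hm
          interval_cases m
          · rintro ⟨h, -⟩; omega
          · rintro ⟨-, h⟩; rw [i1] at h; exact absurd h.2 (by push_neg; linarith)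
          · rintro ⟨-, h⟩; rw [i2] at h; exact absurd h.2 (by push_neg; linarith)
          · rintro ⟨-, h⟩; rw [i3] at h; exact absurd h.2 (by push_neg; linarith)
      rw [hs, i4]
    · -- Case 2: y ∈ [α² − α³, α² − α⁴), return time 6, translation α⁴
      rintro ⟨hy0, hy1⟩
      have hy0' : 1 - 3 * α ≤ y := by linarith
      have hy1' : y < 1 - 2 * α - 3 * α ^ 2 := by linarith
      have e1 : T y = y + α := hT1 y ⟨by linarith, by linarith⟩
      have e2 : T (y + α) = y + 2 * α := by
        rw [hT1 (y + α) ⟨by linarith, by linarith⟩]; ring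
      have e3 : T (y + 2 * α) = y + 2 * α + α ^ 2 := by
        rw [hT2 (y + 2 * α) ⟨by linarith, by linarith⟩]
      have e4 : T (y + 2 * α + α ^ 2) = y + 2 * α + 2 * α ^ 2 := by
        rw [hT2 (y + 2 * α + α ^ 2) ⟨by linarith, by linarith⟩]; ring
      have e5 : T (y + 2 * α + 2 * α ^ 2) = y + 2 * α + 3 * α ^ 2 := by
        rw [hT2 (y + 2 * α + 2 * α ^ 2) ⟨by linarith, by linarith⟩]; ring
      have e6 : T (y + 2 * α + 3 * α ^ 2) = y + 2 * α + 3 * α ^ 2 + α ^ 2 - 1 := by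
        rw [hT3 (y + 2 * α + 3 * α ^ 2) ⟨by linarith, by linarith⟩]
      have i1 : T^[1] y = y + α := e1
      have i2 : T^[2] y = y + 2 * α := by show T (T y) = _; rw [e1, e2]
      have i3 : T^[3] y = y + 2 * α + α ^ 2 := by show T (T (T y)) = _; rw [e1, e2, e3]
      have i4 : T^[4] y = y + 2 * α + 2 * α ^ 2 := by
        show T (T (T (T y))) = _; rw [e1, e2, e3, e4]
      have i5 : T^[5] y = y + 2 * α + 3 * α ^ 2 := by
        show T (T (T (T (T y)))) = _; rw [e1, e2, e3, e4, e5]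
      have i6 : T^[6] y = y + α ^ 4 := by
        show T (T (T (T (T (T y))))) = _; rw [e1, e2, e3, e4, e5, e6]; linarith
      have hs : sInf {n : ℕ | 1 ≤ n ∧ T^[n] y ∈ Set.Ico (0 : ℝ) (α ^ 2)} = 6 := by
        apply sInf_ret
        · exact ⟨by norm_num, by rw [i6]; exact ⟨by linarith, by linarith⟩⟩
        · intro m hm
          interval_cases m
          · rintro ⟨h, -⟩; omega
          · rintro ⟨-, h⟩; rw [i1] at h; exact absurd h.2 (by push_neg; linarith)
          · rintro ⟨-, h⟩; rw [i2] at h; exact absurd h.2 (by push_neg; linarith)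
          · rintro ⟨-, h⟩; rw [i3] at h; exact absurd h.2 (by push_neg; linarith)
          · rintro ⟨-, h⟩; rw [i4] at h; exact absurd h.2 (by push_neg; linarith)
          · rintro ⟨-, h⟩; rw [i5] at h; exact absurd h.2 (by push_neg; linarith)
      rw [hs, i6]
    · -- Case 3: y ∈ [α² − α⁴, α²), return time 5, translation α⁴ − α²
      rintro ⟨hy0, hy1⟩
      have hy0' : 1 - 2 * α - 3 * α ^ 2 ≤ y := by linarith
      have e1 : T y = y + α := hT1 y ⟨by linarith, by linarith⟩
      have e2 : T (y + α) = y + 2 * α := by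
        rw [hT1 (y + α) ⟨by linarith, by linarith⟩]; ring
      have e3 : T (y + 2 * α) = y + 2 * α + α ^ 2 := by
        rw [hT2 (y + 2 * α) ⟨by linarith, by linarith⟩]
      have e4 : T (y + 2 * α + α ^ 2) = y + 2 * α + 2 * α ^ 2 := by
        rw [hT2 (y + 2 * α + α ^ 2) ⟨by linarith, by linarith⟩]; ring
      have e5 : T (y + 2 * α + 2 * α ^ 2) = y + 2 * α + 2 * α ^ 2 + α ^ 2 - 1 := by
        rw [hT3 (y + 2 * α + 2 * α ^ 2) ⟨by linarith, by linarith⟩]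
      have i1 : T^[1] y = y + α := e1
      have i2 : T^[2] y = y + 2 * α := by show T (T y) = _; rw [e1, e2]
      have i3 : T^[3] y = y + 2 * α + α ^ 2 := by show T (T (T y)) = _; rw [e1, e2, e3]
      have i4 : T^[4] y = y + 2 * α + 2 * α ^ 2 := by
        show T (T (T (T y))) = _; rw [e1, e2, e3, e4]
      have i5 : T^[5] y = y + α ^ 4 - α ^ 2 := by
        show T (T (T (T (T y)))) = _; rw [e1, e2, e3, e4, e5]; linarith
      have hs : sInf {n : ℕ | 1 ≤ n ∧ T^[n] y ∈ Set.Ico (0 : ℝ) (α ^ 2)} = 5 := by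
        apply sInf_ret
        · exact ⟨by norm_num, by rw [i5]; exact ⟨by linarith, by linarith⟩⟩
        · intro m hm
          interval_cases m
          · rintro ⟨h, -⟩; omega
          · rintro ⟨-, h⟩; rw [i1] at h; exact absurd h.2 (by push_neg; linarith)
          · rintro ⟨-, h⟩; rw [i2] at h; exact absurd h.2 (by push_neg; linarith)
          · rintro ⟨-, h⟩; rw [i3] at h; exact absurd h.2 (by push_neg; linarith)
          · rintro ⟨-, h⟩; rw [i4] at h; exact absurd h.2 (by push_neg; linarith)
      rw [hs, i5]
  refine ⟨key, ?_⟩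
  rintro x ⟨hx0, hx1⟩
  by_cases hA : x < 1 - α
  · have hm : α ^ 2 * x ∈ Set.Ico (0 : ℝ) (α ^ 2 - α ^ 3) := by
      constructor
      · exact mul_nonneg (le_of_lt h2pos) hx0
      · have := mul_lt_mul_of_pos_left hA h2pos
        linarith [this]
    rw [(key (α ^ 2 * x)).1 hm, hT1 x ⟨hx0, hA⟩]; ring
  · push_neg at hA
    by_cases hB : x < 1 - α ^ 2
    · have hm : α ^ 2 * x ∈ Set.Ico (α ^ 2 - α ^ 3) (α ^ 2 - α ^ 4) := by
        constructor
        · have := mul_le_mul_of_nonneg_left hA (le_of_lt h2pos)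
          linarith [this]
        · have := mul_lt_mul_of_pos_left hB h2pos
          linarith [this]
      rw [(key (α ^ 2 * x)).2.1 hm, hT2 x ⟨hA, hB⟩]; ring
    · push_neg at hB
      have hm : α ^ 2 * x ∈ Set.Ico (α ^ 2 - α ^ 4) (α ^ 2) := by
        constructor
        · have := mul_le_mul_of_nonneg_left hB (le_of_lt h2pos)
          linarith [this]
        · have := mul_lt_mul_of_pos_left hx1 h2pos
          linarith [this]
      rw [(key (α ^ 2 * x)).2.2 hm, hT3 x ⟨hB, hx1⟩]; ring
end
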